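/- arXiv:0707.3345 — 4 statements merged into one kernel-verified Lean document; each statement's English description precedes it below -/
import Mathlib

section
/- For every integer p, every ε > 0 and every real t, the vector v(t) = i·diag(cos²t + p sin²t, 1, sin²t + p cos²t − p − 2) + (1−p)·cos t sin t·I₁₃ ∈ su(3) (the vertical vector of the Riemannian submersion SU(3) → SU(3)//S¹_p for the Eschenburg space E_p) satisfies Q_ε(v(t), v(t)) = 3ε + (1−p)²(1−ε)·cos²t·sin²t + ε(p+2)(p−1)·sin²t. -/
open Matrix Complex

/-- the biinvariant inner product `Q(A,B) = -(1/2)·Re tr(AB)` on `su(3)` -/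
noncomputable def Q (A B : Matrix (Fin 3) (Fin 3) ℂ) : ℝ := -(1 / 2) * ((A * B).trace).re

/-- the `Q`-orthogonal projection onto the subalgebra
`𝔨 = {diag(B, -tr B) : B ∈ u(2)} ⊂ su(3)`: it keeps the upper-left `2×2` block and the
`(3,3)` entry and kills the remaining entries. -/
def projK (X : Matrix (Fin 3) (Fin 3) ℂ) : Matrix (Fin 3) (Fin 3) ℂ :=
  Matrix.of fun i j => if (i ≠ 2 ∧ j ≠ 2) ∨ (i = 2 ∧ j = 2) then X i j else 0

/-- the Eschenburg inner product `Q_ε(X,Y) = Q(X,Y) - (1-ε)·Q(X_𝔨, Y_𝔨)` -/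
noncomputable def Qeps (ε : ℝ) (X Y : Matrix (Fin 3) (Fin 3) ℂ) : ℝ :=
  Q X Y - (1 - ε) * Q (projK X) (projK Y)

/-- the vertical vector
`v(t) = i·diag(cos²t + p sin²t, 1, sin²t + p cos²t - p - 2) + (1-p)·cos t sin t·I₁₃`
of the Riemannian submersion `SU(3) → SU(3)//S¹_p` -/
noncomputable def v (p : ℤ) (t : ℝ) : Matrix (Fin 3) (Fin 3) ℂ :=
  !![Complex.I * ((Real.cos t ^ 2 + (p : ℝ) * Real.sin t ^ 2 : ℝ) : ℂ), 0,
       (((1 - (p : ℝ)) * Real.cos t * Real.sin t : ℝ) : ℂ) * Complex.I;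
     0, Complex.I, 0;
     (((1 - (p : ℝ)) * Real.cos t * Real.sin t : ℝ) : ℂ) * Complex.I, 0,
       Complex.I * ((Real.sin t ^ 2 + (p : ℝ) * Real.cos t ^ 2 - (p : ℝ) - 2 : ℝ) : ℂ)]

/-- The squared `Q_ε`-length of the vertical vector of the Riemannian submersion defining
the Eschenburg space `E_p`. -/
theorem vertical_vector_length (p : ℤ) (ε : ℝ) (hε : 0 < ε) (t : ℝ) :
    Qeps ε (v p t) (v p t) =
      3 * ε + (1 - (p : ℝ)) ^ 2 * (1 - ε) * Real.cos t ^ 2 * Real.sin t ^ 2 +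
        ε * ((p : ℝ) + 2) * ((p : ℝ) - 1) * Real.sin t ^ 2 := by
  have hs := Real.sin_sq_add_cos_sq t
  simp only [Qeps, Q, projK, v]
  generalize Real.cos t = c at *
  generalize Real.sin t = s at *
  simp only [Matrix.trace, Matrix.diag, Matrix.mul_apply,
    Fin.sum_univ_three, Matrix.of_apply, Matrix.cons_val', Matrix.cons_val_zero,
    Matrix.cons_val_one, Matrix.head_cons, Matrix.empty_val', Matrix.cons_val_fin_one,
    Matrix.head_fin_const, Matrix.cons_val_two, Matrix.tail_cons]
  simp only [show ((0:Fin 3) = 2) ↔ False from by decide,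
    show ((1:Fin 3) = 2) ↔ False from by decide, not_false_iff, true_or, false_and, or_self,
    if_true, if_false]
  norm_num [Complex.add_re, Complex.mul_re, Complex.mul_im, Complex.I_re, Complex.I_im,
    Complex.ofReal_re, Complex.ofReal_im, ← Complex.ofReal_pow]
  simp only [show ((0:Fin 3) = 2) ↔ False from by decide,
    show ((1:Fin 3) = 2) ↔ False from by decide, if_false, Complex.ofReal_pow]
  norm_num [Complex.add_re, Complex.mul_re, Complex.mul_im, Complex.I_re, Complex.I_im,
    Complex.ofReal_re, Complex.ofReal_im, ← Complex.ofReal_pow]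
  linear_combination (ε * ((1 - (p:ℝ))^2 * s^2 + (1/2) * (c^2 + (2*(p:ℝ) - 1) * s^2 + 1)
    + ((p:ℝ)/2) * ((p:ℝ) * c^2 + (2 - (p:ℝ)) * s^2 - (p:ℝ) - 4))) * hs
end

section
/- Let u(t) = cos t · E₁₂ − sin t · E₂₃ ∈ su(3) and let v(t) = i·diag(cos²t + p sin²t, 1, sin²t + p cos²t − p − 2) + (1−p)·cos t sin t·I₁₃. Then for every integer p, every ε > 0 and every real t: Q_ε(u(t), v(t)) = 0 (i.e. u(t) is horizontal for the Riemannian submersion defining the Eschenburg space E_p), Q_ε(u(t), u(t)) = 1 + (ε−1)·cos²t, Q_ε(E₁₂, E₁₂) = ε, and Q_ε(u(t), E₁₂) = ε·cos t. (These give the metric functions f₂ = 1 + (ε−1)cos²t, g₂ = ε, h₂ = −ε cos t on E_p.) -/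
open Matrix Complex

/-- `E₁₂ ∈ su(3)` -/
def E12 : Matrix (Fin 3) (Fin 3) ℂ := !![0, 1, 0; -1, 0, 0; 0, 0, 0]
/-- `E₂₃ ∈ su(3)` -/
def E23 : Matrix (Fin 3) (Fin 3) ℂ := !![0, 0, 0; 0, 0, 1; 0, -1, 0]
/-- `I₁₃ ∈ su(3)` -/
def I13 : Matrix (Fin 3) (Fin 3) ℂ := !![0, 0, Complex.I; 0, 0, 0; Complex.I, 0, 0]

/-- `u(t) = cos t · E₁₂ - sin t · E₂₃` -/
noncomputable def u (t : ℝ) : Matrix (Fin 3) (Fin 3) ℂ :=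
  ((Real.cos t : ℝ) : ℂ) • E12 - ((Real.sin t : ℝ) : ℂ) • E23

/-- The metric functions `f₂ = 1 + (ε-1)cos²t`, `g₂ = ε`, `h₂ = -ε cos t` on the
Eschenburg space `E_p`:  `u(t)` is horizontal and its `Q_ε`-inner products with itself
and with `E₁₂` are as stated. -/
theorem eschenburg_metric_functions (p : ℤ) (ε : ℝ) (hε : 0 < ε) (t : ℝ) :
    Qeps ε (u t) (v p t) = 0 ∧
    Qeps ε (u t) (u t) = 1 + (ε - 1) * Real.cos t ^ 2 ∧
    Qeps ε E12 E12 = ε ∧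
    Qeps ε (u t) E12 = ε * Real.cos t := by
  have hs := Real.sin_sq_add_cos_sq t
  refine ⟨?_, ?_, ?_, ?_⟩ <;>
  · simp [Qeps, Q, projK, u, v, E12, E23, Matrix.trace, Matrix.mul_apply,
      Fin.sum_univ_three, Matrix.of_apply, Fin.ext_iff, Matrix.vecHead, Matrix.vecTail,
      -Complex.ofReal_cos, -Complex.ofReal_sin] <;> ring_nf <;> nlinarith [hs]
end

section
/- Let X(t) = diag(i cos²t, −i, i sin²t) + cos t sin t · I₁₃ ∈ su(3), let V₀ = i·diag(1,1,−2), and let X^h(t) = X(t) − (Q_ε(X(t),V₀)/Q_ε(V₀,V₀))·V₀ be the Q_ε-orthogonal projection of X(t) away from V₀. Then for every ε > 0 and every real t: Q_ε(X(t), V₀)/Q_ε(V₀,V₀) = −sin²t/2, and Q_ε(X^h(t), X^h(t)) = ((ε−4)·cos⁴t + 2(ε+2)·cos²t + ε)/4. (This is the metric function f₁ of the cohomogeneity one action on the Aloff–Wallach space W⁷ = SU(3)/diag(z,z,z̄²), the case p = 1 of the Eschenburg spaces.) -/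
open Matrix Complex

/-- `X(t) = diag(i cos²t, -i, i sin²t) + cos t sin t · I₁₃` -/
noncomputable def X (t : ℝ) : Matrix (Fin 3) (Fin 3) ℂ :=
  !![Complex.I * ((Real.cos t ^ 2 : ℝ) : ℂ), 0,
       ((Real.cos t * Real.sin t : ℝ) : ℂ) * Complex.I;
     0, -Complex.I, 0;
     ((Real.cos t * Real.sin t : ℝ) : ℂ) * Complex.I, 0,
       Complex.I * ((Real.sin t ^ 2 : ℝ) : ℂ)]

/-- `V₀ = i·diag(1,1,-2)` -/
def V0 : Matrix (Fin 3) (Fin 3) ℂ :=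
  !![Complex.I, 0, 0; 0, Complex.I, 0; 0, 0, -2 * Complex.I]

/-- the `Q_ε`-orthogonal projection of `X(t)` away from `V₀` -/
noncomputable def Xh (ε : ℝ) (t : ℝ) : Matrix (Fin 3) (Fin 3) ℂ :=
  X t - (Qeps ε (X t) V0 / Qeps ε V0 V0) • V0

/-- The metric function `f₁` of the cohomogeneity one action on the Aloff–Wallach space
`W⁷ = SU(3)/diag(z,z,z̄²)` (the case `p = 1` of the Eschenburg spaces). -/
theorem aloff_wallach_f1 (ε : ℝ) (hε : 0 < ε) (t : ℝ) :
    Qeps ε (X t) V0 / Qeps ε V0 V0 = -Real.sin t ^ 2 / 2 ∧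
    Qeps ε (Xh ε t) (Xh ε t) =
      ((ε - 4) * Real.cos t ^ 4 + 2 * (ε + 2) * Real.cos t ^ 2 + ε) / 4 := by
  have h1 : Qeps ε (X t) V0 = -3 * ε * Real.sin t ^ 2 / 2 := by
    simp [Qeps, Q, projK, X, V0, Matrix.trace, Matrix.mul_apply, Fin.sum_univ_three,
      Complex.ext_iff, Fin.isValue, -Complex.ofReal_cos, -Complex.ofReal_sin]
    rw [← Complex.ofReal_pow, ← Complex.ofReal_pow, Complex.ofReal_re, Complex.ofReal_re,
      Real.cos_sq']
    ring
  have h2 : Qeps ε V0 V0 = 3 * ε := by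
    simp [Qeps, Q, projK, V0, Matrix.trace, Matrix.mul_apply, Fin.sum_univ_three]
    ring
  have hr : Qeps ε (X t) V0 / Qeps ε V0 V0 = -Real.sin t ^ 2 / 2 := by
    rw [h1, h2]; field_simp
  refine ⟨hr, ?_⟩
  rw [Xh, hr]
  simp [Qeps, Q, projK, X, V0, Matrix.trace, Matrix.mul_apply, Fin.sum_univ_three,
    Matrix.sub_apply, Matrix.smul_apply, Complex.ext_iff, Fin.isValue,
    -Complex.ofReal_cos, -Complex.ofReal_sin, ← Complex.ofReal_pow, Complex.ofReal_re,
    Complex.ofReal_im]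
  rw [Real.sin_sq t]
  nlinarith [Real.sin_sq_add_cos_sq t]
end

section
/- Let V₀ = i·diag(1,1,−2) ∈ su(3), and define u₁(t) = 2cos t·E₁₂ − 2sin t·I₂₃, u₂(t) = 2cos(2t)·E₁₃ + sin(2t)·diag(i,−i,0), u₃(t) = 2cos t·E₂₃ + 2sin t·I₁₂. Then for every ε > 0 and every real t: (i) u₂(t) is the Q_ε-orthogonal projection of 2cos(2t)·E₁₃ + 2sin(2t)·diag(i,0,−i) away from V₀, while u₁(t) and u₃(t) are already Q_ε-orthogonal to V₀; (ii) Q_ε(u₁,u₁) = 4sin²t + 4ε cos²t, Q_ε(u₂,u₂) = 4cos²(2t) + ε sin²(2t), Q_ε(u₃,u₃) = 4cos²t + 4ε sin²t; (iii) Q_ε(E₁₂,E₁₂) = Q_ε(diag(i,−i,0), diag(i,−i,0)) = Q_ε(I₁₂,I₁₂) = ε; (iv) Q_ε(u₁(t), E₁₂) = 2ε cos t, Q_ε(u₂(t), diag(i,−i,0)) = ε sin(2t), Q_ε(u₃(t), I₁₂) = 2ε sin t. (These are the metric functions f_i, g_i, h_i of the second cohomogeneity one action, by SO(3)SO(3),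 on the Aloff–Wallach space W⁷₍₂₎.) -/
open Matrix Complex

/-- `E₁₃ ∈ su(3)` -/
def E13 : Matrix (Fin 3) (Fin 3) ℂ := !![0, 0, 1; 0, 0, 0; -1, 0, 0]
/-- `I₁₂ ∈ su(3)` -/
def I12 : Matrix (Fin 3) (Fin 3) ℂ := !![0, Complex.I, 0; Complex.I, 0, 0; 0, 0, 0]
/-- `I₂₃ ∈ su(3)` -/
def I23 : Matrix (Fin 3) (Fin 3) ℂ := !![0, 0, 0; 0, 0, Complex.I; 0, Complex.I, 0]

/-- `diag(i,-i,0)` -/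
def D12 : Matrix (Fin 3) (Fin 3) ℂ := !![Complex.I, 0, 0; 0, -Complex.I, 0; 0, 0, 0]

/-- `diag(i,0,-i)` -/
def D13 : Matrix (Fin 3) (Fin 3) ℂ := !![Complex.I, 0, 0; 0, 0, 0; 0, 0, -Complex.I]

/-- `u₁(t) = 2cos t·E₁₂ - 2sin t·I₂₃` -/
noncomputable def u1 (t : ℝ) : Matrix (Fin 3) (Fin 3) ℂ :=
  ((2 * Real.cos t : ℝ) : ℂ) • E12 - ((2 * Real.sin t : ℝ) : ℂ) • I23

/-- `u₂(t) = 2cos 2t·E₁₃ + sin 2t·diag(i,-i,0)` -/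
noncomputable def u2 (t : ℝ) : Matrix (Fin 3) (Fin 3) ℂ :=
  ((2 * Real.cos (2 * t) : ℝ) : ℂ) • E13 + ((Real.sin (2 * t) : ℝ) : ℂ) • D12

/-- `u₃(t) = 2cos t·E₂₃ + 2sin t·I₁₂` -/
noncomputable def u3 (t : ℝ) : Matrix (Fin 3) (Fin 3) ℂ :=
  ((2 * Real.cos t : ℝ) : ℂ) • E23 + ((2 * Real.sin t : ℝ) : ℂ) • I12

/-- `w(t) = 2cos 2t·E₁₃ + 2sin 2t·diag(i,0,-i)` -/
noncomputable def w (t : ℝ) : Matrix (Fin 3) (Fin 3) ℂ :=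
  ((2 * Real.cos (2 * t) : ℝ) : ℂ) • E13 + ((2 * Real.sin (2 * t) : ℝ) : ℂ) • D13

set_option maxHeartbeats 1000000 in
/-- The metric functions `fᵢ, gᵢ, hᵢ` of the second cohomogeneity one action, by
`SO(3)SO(3)`, on the Aloff–Wallach space `W⁷₍₂₎`. -/
theorem aloff_wallach_second_action_metric (ε : ℝ) (hε : 0 < ε) (t : ℝ) :
    -- (i) horizontal projections
    u2 t = w t - (Qeps ε (w t) V0 / Qeps ε V0 V0) • V0 ∧
    Qeps ε (u1 t) V0 = 0 ∧
    Qeps ε (u3 t) V0 = 0 ∧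
    -- (ii) the functions fᵢ
    Qeps ε (u1 t) (u1 t) = 4 * Real.sin t ^ 2 + 4 * ε * Real.cos t ^ 2 ∧
    Qeps ε (u2 t) (u2 t) = 4 * Real.cos (2 * t) ^ 2 + ε * Real.sin (2 * t) ^ 2 ∧
    Qeps ε (u3 t) (u3 t) = 4 * Real.cos t ^ 2 + 4 * ε * Real.sin t ^ 2 ∧
    -- (iii) the functions gᵢ
    Qeps ε E12 E12 = ε ∧
    Qeps ε D12 D12 = ε ∧
    Qeps ε I12 I12 = ε ∧
    -- (iv) the functions hᵢ
    Qeps ε (u1 t) E12 = 2 * ε * Real.cos t ∧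
    Qeps ε (u2 t) D12 = ε * Real.sin (2 * t) ∧
    Qeps ε (u3 t) I12 = 2 * ε * Real.sin t := by
  have hwV0 : Qeps ε (w t) V0 = 3 * ε * Real.sin (2 * t) := by
    simp [Qeps, Q, projK, w, E13, D13, V0, Matrix.trace_fin_three, Matrix.mul_apply,
      Fin.sum_univ_three, Matrix.smul_apply, Matrix.add_apply,
      Matrix.vecHead, Matrix.vecTail, Function.comp,
      -Complex.ofReal_sin, -Complex.ofReal_cos]
    ring
  have hV0V0 : Qeps ε V0 V0 = 3 * ε := by
    simp [Qeps, Q, projK, V0, Matrix.trace_fin_three, Matrix.mul_apply,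
      Fin.sum_univ_three]
    ring
  refine ⟨?_, ?_, ?_, ?_, ?_, ?_, ?_, ?_, ?_, ?_, ?_, ?_⟩
  · rw [hwV0, hV0V0]
    have h3 : 3 * ε * Real.sin (2 * t) / (3 * ε) = Real.sin (2 * t) := by
      field_simp
    rw [h3]
    ext i j
    fin_cases i <;> fin_cases j <;>
      simp [u2, w, E13, D12, D13, V0, Matrix.smul_apply, Matrix.sub_apply,
        Matrix.add_apply, Matrix.vecHead, Matrix.vecTail, Function.comp,
        -Complex.ofReal_sin, -Complex.ofReal_cos] <;> ring
  all_goals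
    simp [Qeps, Q, projK, u1, u2, u3, E12, E13, E23, I12, I23, D12, D13, V0,
      Matrix.trace_fin_three, Matrix.mul_apply, Fin.sum_univ_three,
      Matrix.smul_apply, Matrix.sub_apply, Matrix.add_apply,
      Matrix.vecHead, Matrix.vecTail, Function.comp,
      -Complex.ofReal_sin, -Complex.ofReal_cos] <;>
    nlinarith [Real.sin_sq_add_cos_sq t, Real.sin_sq_add_cos_sq (2 * t)]
end
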